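/- Let A be a 3×3 real matrix with ‖A - e^{κt}·Id‖ ≤ (1/9)·e^{κt} in operator norm, for some real numbers κ ≥ 1 and t ≥ 0. Then |det A| ≥ (1/2)·e^{3κt}. -/

import Mathlib

/-!
The hypothesis gives `‖A x‖ ≥ (8/9) e^{κt} ‖x‖`, so `A` is invertible and the image of the unit
ball contains the ball of radius `(8/9) e^{κt}`. Comparing Lebesgue measures,
`|det A| ≥ (8/9)³ e^{3κt} ≥ e^{3κt} / 2`.
-/

open Metric MeasureTheory Module

namespace ContinuousLinearMap

theorem mul_norm_le_norm_apply_of_norm_sub_smul_id_le {𝕜 E : Type*} [NontriviallyNormedField 𝕜]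
    [SeminormedAddCommGroup E] [NormedSpace 𝕜 E] {A : E →L[𝕜] E} {a : 𝕜} {δ : ℝ}
    (hA : ‖A - a • ContinuousLinearMap.id 𝕜 E‖ ≤ δ) (x : E) : (‖a‖ - δ) * ‖x‖ ≤ ‖A x‖ :=
  calc (‖a‖ - δ) * ‖x‖ = ‖a • x‖ - δ * ‖x‖ := by rw [norm_smul]; ring
    _ ≤ ‖a • x‖ - ‖A x - a • x‖ := by
      gcongr
      simpa using (A - a • ContinuousLinearMap.id 𝕜 E).le_of_opNorm_le hA x
    _ ≤ ‖A x‖ := by linarith [norm_sub_norm_le (a • x) (A x), norm_sub_rev (a • x) (A x)]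

variable {E : Type*} [NormedAddCommGroup E] [NormedSpace ℝ E] [FiniteDimensional ℝ E]

theorem ball_subset_image_ball_of_mul_norm_le {A : E →L[ℝ] E} {c : ℝ} (hc : 0 < c)
    (hA : ∀ x, c * ‖x‖ ≤ ‖A x‖) : ball 0 c ⊆ A '' ball 0 1 := by
  have hinj : Function.Injective A := by
    refine (injective_iff_map_eq_zero A).2 fun x hx => norm_le_zero_iff.1 ?_
    have := hA x
    rw [hx, norm_zero] at this
    nlinarith [norm_nonneg x]
  intro y hy
  obtain ⟨x, rfl⟩ := (LinearMap.injective_iff_surjective (f := (A : E →ₗ[ℝ] E))).1 hinj y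
  refine ⟨x, ?_, rfl⟩
  rw [mem_ball_zero_iff] at hy ⊢
  nlinarith [hA x, show ‖A x‖ < c from hy]

theorem pow_finrank_le_abs_det_of_mul_norm_le {A : E →L[ℝ] E} {c : ℝ} (hc : 0 < c)
    (hA : ∀ x, c * ‖x‖ ≤ ‖A x‖) : c ^ finrank ℝ E ≤ |A.det| := by
  let _ : MeasurableSpace E := borel E
  have : BorelSpace E := ⟨rfl⟩
  let μ : Measure E := Measure.addHaar
  have hvol := measure_mono (μ := μ) (ball_subset_image_ball_of_mul_norm_le hc hA)
  rw [Measure.addHaar_image_continuousLinearMap, Measure.addHaar_ball_of_pos μ _ hc,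
    ENNReal.mul_le_mul_iff_left (measure_ball_pos μ _ one_pos).ne' measure_ball_lt_top.ne,
    ENNReal.ofReal_le_ofReal_iff (abs_nonneg _)] at hvol
  exact hvol

end ContinuousLinearMap

theorem stmt2_general
    (A : EuclideanSpace ℝ (Fin 3) →L[ℝ] EuclideanSpace ℝ (Fin 3))
    (κ t : ℝ)
    (hA : ‖A - Real.exp (κ * t) • (ContinuousLinearMap.id ℝ (EuclideanSpace ℝ (Fin 3)))‖
        ≤ (1 / 9) * Real.exp (κ * t)) :
    (1 / 2) * Real.exp (3 * κ * t) ≤ |A.det| := by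
  set e := Real.exp (κ * t)
  have he : 0 < e := Real.exp_pos _
  have hlow : ∀ x, (8 / 9 * e) * ‖x‖ ≤ ‖A x‖ := fun x => by
    have := ContinuousLinearMap.mul_norm_le_norm_apply_of_norm_sub_smul_id_le hA x
    rwa [Real.norm_of_nonneg he.le, show e - 1 / 9 * e = 8 / 9 * e by ring] at this
  have hdet := ContinuousLinearMap.pow_finrank_le_abs_det_of_mul_norm_le (by positivity) hlow
  rw [finrank_euclideanSpace_fin] at hdet
  calc (1 / 2) * Real.exp (3 * κ * t) = (1 / 2) * e ^ 3 := by
        rw [← Real.exp_nat_mul, mul_assoc]; norm_num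
    _ ≤ (8 / 9 * e) ^ 3 := by nlinarith [pow_pos he 3]
    _ ≤ |A.det| := hdet

/-- If a linear map `A` on `ℝ³` satisfies `‖A - e^{κt}·Id‖ ≤ (1/9)·e^{κt}` in operator norm,
with `κ ≥ 1` and `t ≥ 0`, then `|det A| ≥ (1/2)·e^{3κt}`. -/
theorem stmt2
    (A : EuclideanSpace ℝ (Fin 3) →L[ℝ] EuclideanSpace ℝ (Fin 3))
    (κ t : ℝ) (hκ : 1 ≤ κ) (ht : 0 ≤ t)
    (hA : ‖A - Real.exp (κ * t) • (ContinuousLinearMap.id ℝ (EuclideanSpace ℝ (Fin 3)))‖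
        ≤ (1 / 9) * Real.exp (κ * t)) :
    (1 / 2) * Real.exp (3 * κ * t) ≤ |A.det| :=
  stmt2_general A κ t hA
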